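/- Every symmetric positive definite matrix K with K_{ij} < 0 for all edges (i,j) ∈ E and K_{ij} = 0 for non-edges admits a unique upper triangular Cholesky factor Φ with positive diagonal satisfying: Φ_{ii} > 0, Φ_{ij} = -(1/Φ_{ii}) Σ_{d<i} Φ_{di}Φ_{dj} for (i,j) ∉ E, and Φ_{ij} < -(1/Φ_{ii}) Σ_{d<i} Φ_{di}Φ_{dj} for (i,j) ∈ E. -/

import Mathlib

/-!
Existence comes from the LDL decomposition `K = L D Lᵀ` of a positive definite matrix:
`B = √D Lᵀ` is upper triangular with `K = Bᵀ B`, and multiplying its rows by the signs of its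
(nonzero) diagonal entries makes the diagonal positive without changing `Bᵀ B`.

For an upper triangular `Φ` the `(i, j)` entry of `Φᵀ Φ` is
`Φ i i * Φ i j + ∑_{d < i} Φ d i * Φ d j`. Read row by row, this identity determines `Φ`
from `K = Φᵀ Φ` once the diagonal is positive, which gives uniqueness; and with `K i j = 0`
at non-edges, `K i j < 0` at edges, it is exactly the two stated conditions on `Φ i j`.
-/

open Matrix Finset

namespace Matrix

variable {ι R : Type*} [Fintype ι] [LinearOrder ι]

theorem IsUpperTriangular.transpose_mul_self_apply [LocallyFiniteOrderBot ι] [CommSemiring R]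
    {Φ : Matrix ι ι R} (hΦ : Φ.IsUpperTriangular) (i j : ι) :
    (Φᵀ * Φ) i j = Φ i i * Φ i j + ∑ d ∈ Iio i, Φ d i * Φ d j := by
  have hvanish : ∀ k ∈ univ, k ∉ Iic i → Φ k i * Φ k j = 0 := fun k _ hk =>
    by rw [hΦ (not_le.mp (mem_Iic.not.mp hk)), zero_mul]
  simp only [mul_apply, transpose_apply]
  rw [← sum_subset (subset_univ _) hvanish, ← Iio_insert, sum_insert notMem_Iio_self]

theorem IsUpperTriangular.eq_of_transpose_mul_self_eq [LocallyFiniteOrderBot ι] [Field R]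
    [LinearOrder R] [IsStrictOrderedRing R] {Φ Ψ : Matrix ι ι R}
    (hΦ : Φ.IsUpperTriangular) (hΨ : Ψ.IsUpperTriangular)
    (hΦpos : ∀ i, 0 < Φ i i) (hΨpos : ∀ i, 0 < Ψ i i) (h : Φᵀ * Φ = Ψᵀ * Ψ) : Φ = Ψ := by
  refine funext fun i => ?_
  induction i using WellFoundedLT.induction with
  | _ i ih =>
  have hsum : ∀ j, ∑ d ∈ Iio i, Φ d i * Φ d j = ∑ d ∈ Iio i, Ψ d i * Ψ d j :=
    fun j => sum_congr rfl fun d hd => by rw [ih d (mem_Iio.mp hd)]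
  have hentry : ∀ j, Φ i i * Φ i j = Ψ i i * Ψ i j := fun j => by
    have := congrFun (congrFun h i) j
    rw [hΦ.transpose_mul_self_apply, hΨ.transpose_mul_self_apply, hsum] at this
    exact add_right_cancel this
  have hdiag : Φ i i = Ψ i i :=
    (pow_left_inj₀ (hΦpos i).le (hΨpos i).le two_ne_zero).mp (by simpa [sq] using hentry i)
  funext j
  exact mul_left_cancel₀ (hΦpos i).ne' (hdiag ▸ hentry j)

theorem IsUpperTriangular.exists_pos_diag_transpose_mul_self_eq [DecidableEq ι] [Field R]
    [LinearOrder R] [IsStrictOrderedRing R] {B : Matrix ι ι R} (hB : B.IsUpperTriangular)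
    (hdet : B.det ≠ 0) :
    ∃ Φ : Matrix ι ι R, Φ.IsUpperTriangular ∧ (∀ i, 0 < Φ i i) ∧ Φᵀ * Φ = Bᵀ * B := by
  have hdiag : ∀ i, B i i ≠ 0 := fun i h =>
    hdet (by rw [det_of_isUpperTriangular hB]; exact prod_eq_zero (mem_univ i) h)
  set ε : ι → R := fun i => SignType.sign (B i i)
  have hε : ∀ i, ε i * ε i = 1 := fun i => by
    rcases (hdiag i).lt_or_gt with h | h <;> simp [ε, sign_neg, sign_pos, h]
  refine ⟨diagonal ε * B, fun i j hij => by simp [diagonal_mul, hB hij], fun i => ?_, ?_⟩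
  · simpa [diagonal_mul, ε, sign_mul_self] using hdiag i
  · rw [transpose_mul, diagonal_transpose, Matrix.mul_assoc, ← Matrix.mul_assoc (diagonal ε),
      diagonal_mul_diagonal]
    simp only [hε, diagonal_one, Matrix.one_mul]

variable [WellFoundedLT ι] [LocallyFiniteOrderBot ι]

theorem PosDef.exists_isUpperTriangular_transpose_mul_self_eq {K : Matrix ι ι ℝ}
    (hK : K.PosDef) : ∃ B : Matrix ι ι ℝ, B.IsUpperTriangular ∧ K = Bᵀ * B := by
  classical
  set L := LDL.lower hK
  set d := LDL.diagEntries hK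
  have hd : ∀ i, 0 < d i := fun i => by
    have hD : (LDL.diag hK).PosDef := by
      rw [LDL.diag_eq_lowerInv_conj]
      exact hK.mul_mul_conjTranspose_same (vecMul_injective_of_invertible _)
    simpa [LDL.diag] using hD.diag_pos (i := i)
  have hL : L.IsLowerTriangular :=
    blockTriangular_inv_of_blockTriangular fun _ _ hij => LDL.lowerInv_triangular hK hij
  refine ⟨diagonal (fun i => √(d i)) * Lᵀ, fun i j hij => by simp [diagonal_mul, hL hij], ?_⟩
  have hsq : diagonal (fun i => √(d i)) * diagonal (fun i => √(d i)) = LDL.diag hK := by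
    rw [diagonal_mul_diagonal, LDL.diag]
    exact congrArg diagonal (funext fun i => Real.mul_self_sqrt (hd i).le)
  conv_lhs => rw [← LDL.lower_conj_diag hK]
  rw [transpose_mul, transpose_transpose, diagonal_transpose,
    conjTranspose_eq_transpose_of_trivial, ← hsq, Matrix.mul_assoc, Matrix.mul_assoc,
    Matrix.mul_assoc]

theorem PosDef.exists_cholesky {K : Matrix ι ι ℝ} (hK : K.PosDef) :
    ∃ Φ : Matrix ι ι ℝ, Φ.IsUpperTriangular ∧ (∀ i, 0 < Φ i i) ∧ K = Φᵀ * Φ := by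
  classical
  obtain ⟨B, hB, rfl⟩ := hK.exists_isUpperTriangular_transpose_mul_self_eq
  have hdet : B.det ≠ 0 := fun h => hK.det_pos.ne' (by simp [det_mul, h])
  obtain ⟨Φ, hΦ, hpos, hΦB⟩ := hB.exists_pos_diag_transpose_mul_self_eq hdet
  exact ⟨Φ, hΦ, hpos, hΦB.symm⟩

end Matrix

/-- Every symmetric positive definite matrix `K` with `K i j < 0` at edges of `G` and
`K i j = 0` at non-edges admits a unique upper triangular Cholesky factor `Φ` with positive
diagonal such that `K = Φᵀ * Φ`, and this factor satisfies
`Φ i j = -(1/Φ i i) * ∑_{d < i} Φ d i * Φ d j` at non-edges and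
`Φ i j < -(1/Φ i i) * ∑_{d < i} Φ d i * Φ d j` at edges `(i,j)` with `i < j`. -/
theorem cholesky_of_truncated_cone {n : ℕ} (G : SimpleGraph (Fin n))
    (K : Matrix (Fin n) (Fin n) ℝ) (hK : K.PosDef)
    (hzero : ∀ i j, i ≠ j → ¬G.Adj i j → K i j = 0)
    (hneg : ∀ i j, G.Adj i j → K i j < 0) :
    ∃! Φ : Matrix (Fin n) (Fin n) ℝ,
      (∀ i j : Fin n, j < i → Φ i j = 0) ∧
      (∀ i : Fin n, 0 < Φ i i) ∧
      K = Φᵀ * Φ ∧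
      (∀ i j : Fin n, i < j → ¬G.Adj i j →
        Φ i j = -(1 / Φ i i) * ∑ d ∈ Finset.Iio i, Φ d i * Φ d j) ∧
      (∀ i j : Fin n, i < j → G.Adj i j →
        Φ i j < -(1 / Φ i i) * ∑ d ∈ Finset.Iio i, Φ d i * Φ d j) := by
  obtain ⟨Φ, htri, hpos, hK_eq⟩ := hK.exists_cholesky
  have hbound : ∀ i j, -(1 / Φ i i) * ∑ d ∈ Iio i, Φ d i * Φ d j = Φ i j - K i j / Φ i i :=
    fun i j => by
      rw [hK_eq, htri.transpose_mul_self_apply]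
      field_simp [(hpos i).ne']
      ring
  refine ⟨Φ, ⟨htri, hpos, hK_eq, fun i j hij hadj => ?_, fun i j _ hadj => ?_⟩, ?_⟩
  · rw [hbound, hzero i j hij.ne hadj, zero_div, sub_zero]
  · rw [hbound]
    linarith [div_neg_of_neg_of_pos (hneg i j hadj) (hpos i)]
  · rintro Ψ ⟨hΨtri, hΨpos, hΨ_eq, -, -⟩
    exact IsUpperTriangular.eq_of_transpose_mul_self_eq hΨtri htri hΨpos hpos (hΨ_eq ▸ hK_eq)
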